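/- arXiv:2008.06806 — 2 statements merged into one kernel-verified Lean document; each statement's English description precedes it below -/
import Mathlib

section
/- Let X be a proper geodesic δ-hyperbolic space such that the Gromov boundary ∂X contains at least two points, and suppose that X is K-roughly starlike from some point x ∈ X ∪ ∂X. Then there is a constant K' ≥ 0 such that X is K'-roughly starlike from all points of X ∪ ∂X. -/
/-!
Rough starlikeness from one point of `X ∪ ∂X` yields a constant `C` such that every point `x` is
`C`-close to geodesic segments `[a,b]` with `a` and `b` arbitrarily far from `x`. From a boundary
point this is read off the lines; from a point `z` one uses two non-equivalent rays `ρ₁, ρ₂`, whose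
far points have Gromov products `(ρ₁ m | ρ₂ m)_z` bounded independently of `m`.

Conversely, this property gives rough starlikeness from every point. Given `w ∈ X` (resp. a ray
`ρ`), thinness of the triangle `w a b` (resp. `ρ(n) a b`) shows that a geodesic from `w` (resp.
`ρ(n)`) to `a` or to `b` passes `(C + δ)`-close to `x`. By properness these geodesics converge along
an ultrafilter to a ray from `w` (resp. a line), still `(C + δ)`-close to `x`; for the line, thin
triangles with vertex `ρ 0` show that its backward end stays at bounded distance from `ρ`.
-/

open Metric Set Filter Topology
open scoped ENNReal Classical

noncomputable section

namespace Paper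

variable {X Y : Type*}

/-- The distance function of a metric space. -/
def distFun (X : Type*) [MetricSpace X] : X → X → ℝ := fun p q => dist p q

/-- `e` is a genuine metric distance function. -/
def IsMetricDist (e : X → X → ℝ) : Prop :=
  (∀ x, e x x = 0) ∧ (∀ x y, x ≠ y → 0 < e x y) ∧ (∀ x y, e x y = e y x) ∧
    ∀ x y z, e x z ≤ e x y + e y z

/-- Cauchy sequence with respect to the distance function `e`. -/
def CauchyWrt (e : X → X → ℝ) (u : ℕ → X) : Prop :=
  ∀ δ : ℝ, 0 < δ → ∃ N : ℕ, ∀ m, N ≤ m → ∀ n, N ≤ n → e (u m) (u n) < δ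

/-- The sequence converges, w.r.t. `e`, to a point of the space. -/
def ConvWrt (e : X → X → ℝ) (u : ℕ → X) : Prop :=
  ∃ y : X, Tendsto (fun n => e (u n) y) atTop (𝓝 0)

/-- The space is incomplete with respect to `e`:
some Cauchy sequence does not converge in the space. -/
def IncompleteWrt (e : X → X → ℝ) : Prop :=
  ∃ u : ℕ → X, CauchyWrt e u ∧ ¬ ConvWrt e u

/-- Distance from `x` to the metric boundary (the completion minus the space),
measured w.r.t. `e`: the infimum of the limits `lim_n e x (u n)` over all Cauchy
sequences `u` that have no limit in the space. -/
def bdryDistWrt (e : X → X → ℝ) (x : X) : ℝ :=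
  sInf { r : ℝ | ∃ u : ℕ → X, CauchyWrt e u ∧ ¬ ConvWrt e u ∧
    Tendsto (fun n => e x (u n)) atTop (𝓝 r) }

/-- Sequential compactness of a set w.r.t. `e`. -/
def SeqCompactWrt (e : X → X → ℝ) (s : Set X) : Prop :=
  ∀ u : ℕ → X, (∀ n, u n ∈ s) → ∃ y ∈ s, ∃ φ : ℕ → ℕ, StrictMono φ ∧
    Tendsto (fun n => e (u (φ n)) y) atTop (𝓝 0)

/-- Local compactness w.r.t. `e`: every point has arbitrarily small compact closed balls. -/
def LocallyCompactWrt (e : X → X → ℝ) : Prop :=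
  ∀ x : X, ∀ r : ℝ, 0 < r → ∃ r' : ℝ, 0 < r' ∧ r' ≤ r ∧ SeqCompactWrt e { y | e x y ≤ r' }

/-- Continuity of a curve on a set of parameters, w.r.t. `e`. -/
def ContinuousOnWrt (e : X → X → ℝ) (γ : ℝ → X) (I : Set ℝ) : Prop :=
  ∀ t ∈ I, ∀ δ : ℝ, 0 < δ → ∃ η : ℝ, 0 < η ∧ ∀ s ∈ I, |s - t| < η → e (γ s) (γ t) < δ

/-- The length (total variation) of the curve `γ` on the parameter set `I`, w.r.t. `e`. -/
def varOn (e : X → X → ℝ) (γ : ℝ → X) (I : Set ℝ) : ℝ≥0∞ :=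
  ⨆ p : ℕ × { u : ℕ → ℝ // Monotone u ∧ ∀ i, u i ∈ I },
    ∑ i ∈ Finset.range p.1, ENNReal.ofReal (e (γ (p.2.1 (i + 1))) (γ (p.2.1 i)))

/-- `X` with distance `e` is an `A`-uniform metric space: it is a locally compact,
incomplete metric space any two of whose points are joined by an `A`-uniform curve. -/
def IsUniformSpcWrt (e : X → X → ℝ) (A : ℝ) : Prop :=
  IsMetricDist e ∧ LocallyCompactWrt e ∧ IncompleteWrt e ∧
  ∀ x y : X, ∃ (a b : ℝ) (γ : ℝ → X), a ≤ b ∧ ContinuousOnWrt e γ (Icc a b) ∧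
    γ a = x ∧ γ b = y ∧
    varOn e γ (Icc a b) ≤ ENNReal.ofReal (A * e x y) ∧
    ∀ t ∈ Icc a b, min (varOn e γ (Icc a t)) (varOn e γ (Icc t b)) ≤
      ENNReal.ofReal (A * bdryDistWrt e (γ t))

/-- `f` is `∂`-Lipschitz with data `(L, lam)`. -/
def PartialLipschitzWrt (e : X → X → ℝ) (e' : Y → Y → ℝ) (L lam : ℝ) (f : X → Y) : Prop :=
  ∀ x y z : X, e y x < lam * bdryDistWrt e x → e z x < lam * bdryDistWrt e x →
    e' (f y) (f z) / bdryDistWrt e' (f x) ≤ L * (e y z / bdryDistWrt e x)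

/-- `f` (with inverse `g`) is `∂`-biLipschitz with data `(L, lam)`. -/
def PartialBiLipschitzWrt (e : X → X → ℝ) (e' : Y → Y → ℝ) (L lam : ℝ)
    (f : X → Y) (g : Y → X) : Prop :=
  1 ≤ L ∧ Function.LeftInverse g f ∧ Function.RightInverse g f ∧
    PartialLipschitzWrt e e' L lam f ∧ PartialLipschitzWrt e' e L lam g

/-- Cross-ratio of a quadruple of points, w.r.t. `e`. -/
def crossRatioWrt (e : X → X → ℝ) (x y z w : X) : ℝ := e x z * e y w / (e x y * e z w)

/-- `f` is `η`-quasimöbius. -/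
def QuasiMobiusWrt (e : X → X → ℝ) (e' : Y → Y → ℝ) (η : ℝ → ℝ) (f : X → Y) : Prop :=
  ∀ x y z w : X, x ≠ y → x ≠ z → x ≠ w → y ≠ z → y ≠ w → z ≠ w →
    crossRatioWrt e' (f x) (f y) (f z) (f w) ≤ η (crossRatioWrt e x y z w)

/-- `f` is `η`-quasisymmetric. -/
def QuasiSymmetricWrt (e : X → X → ℝ) (e' : Y → Y → ℝ) (η : ℝ → ℝ) (f : X → Y) : Prop :=
  ∀ x y z : X, ∀ t : ℝ, 0 ≤ t → e x y ≤ t * e x z → e' (f x) (f y) ≤ η t * e' (f x) (f z)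

/-- `η` is (the restriction to `[0,∞)` of) a self-homeomorphism of `[0,∞)`:
continuous, strictly increasing, fixing `0`, and tending to `∞`. -/
def IsControlFun (η : ℝ → ℝ) : Prop :=
  ContinuousOn η (Ici 0) ∧ StrictMonoOn η (Ici 0) ∧ η 0 = 0 ∧ Tendsto η atTop atTop

/-- The conformal deformation distance with conformal factor `ρ`: the infimum of
`∫ ρ ∘ γ` over all `1`-Lipschitz (w.r.t. `e`) curves joining `x` to `y`
(equivalently, the infimum of `∫_γ ρ ds` over all rectifiable curves joining `x` to `y`). -/
def confDistWrt (e : X → X → ℝ) (ρ : X → ℝ) (x y : X) : ℝ :=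
  sInf { l : ℝ | ∃ (T : ℝ) (γ : ℝ → X), 0 ≤ T ∧
    (∀ s ∈ Icc 0 T, ∀ t ∈ Icc 0 T, e (γ s) (γ t) ≤ |s - t|) ∧
    γ 0 = x ∧ γ T = y ∧ l = ∫ t in (0:ℝ)..T, ρ (γ t) }

/-- The quasihyperbolic metric of the space with distance `e`. -/
def quasiHypWrt (e : X → X → ℝ) : X → X → ℝ :=
  confDistWrt e fun z => (bdryDistWrt e z)⁻¹

/-- `γ` is a geodesic segment from `x` to `y`, parametrized by arclength on `[0, e x y]`. -/
def IsGeodesicSegWrt (e : X → X → ℝ) (γ : ℝ → X) (x y : X) : Prop :=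
  γ 0 = x ∧ γ (e x y) = y ∧
    ∀ s ∈ Icc 0 (e x y), ∀ t ∈ Icc 0 (e x y), e (γ s) (γ t) = |s - t|

/-- Any two points are joined by a geodesic. -/
def GeodesicSpaceWrt (e : X → X → ℝ) : Prop := ∀ x y : X, ∃ γ : ℝ → X, IsGeodesicSegWrt e γ x y

/-- The image of a geodesic segment. -/
def segImageWrt (e : X → X → ℝ) (γ : ℝ → X) (x y : X) : Set X := γ '' Icc 0 (e x y)

/-- `δ`-hyperbolicity: every geodesic triangle is `δ`-thin. -/
def DeltaHyperbolicWrt (e : X → X → ℝ) (δ : ℝ) : Prop :=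
  ∀ (x y z : X) (γ₁ γ₂ γ₃ : ℝ → X),
    IsGeodesicSegWrt e γ₁ x y → IsGeodesicSegWrt e γ₂ y z → IsGeodesicSegWrt e γ₃ z x →
    (∀ p ∈ segImageWrt e γ₁ x y, ∃ q ∈ segImageWrt e γ₂ y z ∪ segImageWrt e γ₃ z x, e p q ≤ δ) ∧
    (∀ p ∈ segImageWrt e γ₂ y z, ∃ q ∈ segImageWrt e γ₁ x y ∪ segImageWrt e γ₃ z x, e p q ≤ δ) ∧
    (∀ p ∈ segImageWrt e γ₃ z x, ∃ q ∈ segImageWrt e γ₁ x y ∪ segImageWrt e γ₂ y z, e p q ≤ δ)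

/-- `γ` is a geodesic ray (defined on `[0,∞)`). -/
def IsGeodesicRayWrt (e : X → X → ℝ) (γ : ℝ → X) : Prop :=
  ∀ s ∈ Ici (0:ℝ), ∀ t ∈ Ici (0:ℝ), e (γ s) (γ t) = |s - t|

/-- `γ` is a geodesic line. -/
def IsGeodesicLineWrt (e : X → X → ℝ) (γ : ℝ → X) : Prop :=
  ∀ s t : ℝ, e (γ s) (γ t) = |s - t|

/-- Two rays are at bounded distance from each other (represent the same
point of the Gromov boundary). -/
def RayEquivWrt (e : X → X → ℝ) (γ σ : ℝ → X) : Prop :=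
  ∃ c : ℝ, ∀ t ∈ Ici (0:ℝ), e (γ t) (σ t) ≤ c

/-- The infimal distance from `x` to the set `s`, w.r.t. `e`. -/
def infDistWrt (e : X → X → ℝ) (x : X) (s : Set X) : ℝ := sInf (e x '' s)

/-- `X` is `K`-roughly starlike from the point `z`. -/
def RoughStarlikeFromPointWrt (e : X → X → ℝ) (K : ℝ) (z : X) : Prop :=
  ∀ x : X, ∃ γ : ℝ → X, IsGeodesicRayWrt e γ ∧ γ 0 = z ∧ infDistWrt e x (γ '' Ici 0) ≤ K

/-- `X` is `K`-roughly starlike from the Gromov boundary point represented by the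
geodesic ray `ρ`: every point lies within distance `K` of a geodesic line starting
from that boundary point. -/
def RoughStarlikeFromRayWrt (e : X → X → ℝ) (K : ℝ) (ρ : ℝ → X) : Prop :=
  ∀ x : X, ∃ γ : ℝ → X, IsGeodesicLineWrt e γ ∧ RayEquivWrt e (fun t => γ (-t)) ρ ∧
    infDistWrt e x (range γ) ≤ K

/-- The Busemann function of the geodesic ray `ρ`:
`b_ρ(x) = lim_{t→∞} (e (ρ t) x - t) = inf_{t ≥ 0} (e (ρ t) x - t)`. -/
def busemannWrt (e : X → X → ℝ) (ρ : ℝ → X) (x : X) : ℝ :=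
  sInf ((fun t => e (ρ t) x - t) '' Ici 0)

/-- `b ∈ 𝔅̂(X)` (either a translated distance function or a translated Busemann
function), and `X` is `K`-roughly starlike from the basepoint of `b`. -/
def BhatStarlike (e : X → X → ℝ) (K : ℝ) (b : X → ℝ) : Prop :=
  (∃ (z : X) (s : ℝ), (∀ x, b x = e x z + s) ∧ RoughStarlikeFromPointWrt e K z) ∨
  (∃ (ρ : ℝ → X) (s : ℝ), IsGeodesicRayWrt e ρ ∧ (∀ x, b x = busemannWrt e ρ x + s) ∧
    RoughStarlikeFromRayWrt e K ρ)

/-- `ρ` is a Gehring–Hayman density with constant `M`: the `ρ`-length of any geodesic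
is at most `M` times the conformal distance between its endpoints. -/
def IsGHDensityWrt (e : X → X → ℝ) (M : ℝ) (ρ : X → ℝ) : Prop :=
  ∀ (x y : X) (γ : ℝ → X), IsGeodesicSegWrt e γ x y →
    (∫ t in (0:ℝ)..(e x y), ρ (γ t)) ≤ M * confDistWrt e ρ x y

/-- The density `ρ_{ε,b}(x) = e^{-ε b(x)}`. -/
def uniformizationDensity (b : X → ℝ) (ε : ℝ) : X → ℝ := fun x => Real.exp (-ε * b x)

/-- The Gromov product of `x` and `y` based at `z`. -/
def gromovProdWrt (e : X → X → ℝ) (z x y : X) : ℝ := (e x z + e y z - e x y) / 2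

/-- The sequence `u` represents the Gromov boundary point of the geodesic ray `ρ`
(with respect to the basepoint `z`). -/
def SeqRepWrt (e : X → X → ℝ) (z : X) (ρ : ℝ → X) (u : ℕ → X) : Prop :=
  Tendsto (fun n => gromovProdWrt e z (u n) (ρ n)) atTop atTop

/-- The Gromov product, based at `z`, of the two boundary points represented by the
geodesic rays `ρ` and `σ` (valued in `[0,∞]`). -/
def bGromovProdWrt (e : X → X → ℝ) (z : X) (ρ σ : ℝ → X) : ℝ≥0∞ :=
  ⨅ (u : { u : ℕ → X // SeqRepWrt e z ρ u }) (v : { v : ℕ → X // SeqRepWrt e z σ v }),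
    Filter.liminf (fun n => ENNReal.ofReal (gromovProdWrt e z (u.1 n) (v.1 n))) atTop

/-- `S(x) = sup_{ω ∈ ∂X} inf_{ξ ∈ ∂X} (ω|ξ)_x`. -/
def Sfun (e : X → X → ℝ) (x : X) : ℝ≥0∞ :=
  ⨆ (ω : { ρ : ℝ → X // IsGeodesicRayWrt e ρ }),
    ⨅ (ξ : { ρ : ℝ → X // IsGeodesicRayWrt e ρ }), bGromovProdWrt e x ω.1 ξ.1

/-- The filter at the left end of the interval `I`. -/
def leftEndFilter (I : Set ℝ) : Filter ℝ :=
  if BddBelow I then 𝓝[I] (sInf I) else atBot ⊓ 𝓟 I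

/-- The filter at the right end of the interval `I`. -/
def rightEndFilter (I : Set ℝ) : Filter ℝ :=
  if BddAbove I then 𝓝[I] (sSup I) else atTop ⊓ 𝓟 I

/-- `γ : I → Ω` is an `A`-uniform curve: it is rectifiable with endpoints
`γ₋, γ₊` in the completion `Ω̄` satisfying `ℓ(γ) ≤ A d(γ₋,γ₊)` (or non-rectifiable with
`d(γ(s),γ(t)) → ∞` towards the endpoints of `I`), and at every time `t` the shorter of
the two subcurves has length at most `A d_Ω(γ(t))`. -/
def IsUniformCurve {Ω : Type*} [MetricSpace Ω] (A : ℝ) (γ : ℝ → Ω) (I : Set ℝ) : Prop :=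
  I.Nonempty ∧ I.OrdConnected ∧ ContinuousOn γ I ∧
  ((varOn (distFun Ω) γ I ≠ ⊤ ∧
     ∃ gm gp : UniformSpace.Completion Ω,
       Tendsto (fun t => (γ t : UniformSpace.Completion Ω)) (leftEndFilter I) (𝓝 gm) ∧
       Tendsto (fun t => (γ t : UniformSpace.Completion Ω)) (rightEndFilter I) (𝓝 gp) ∧
       varOn (distFun Ω) γ I ≤ ENNReal.ofReal (A * dist gm gp)) ∨
   (varOn (distFun Ω) γ I = ⊤ ∧
     Tendsto (fun pq : ℝ × ℝ => dist (γ pq.1) (γ pq.2))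
       (leftEndFilter I ×ˢ rightEndFilter I) atTop)) ∧
  ∀ t ∈ I, min (varOn (distFun Ω) γ (I ∩ Iic t)) (varOn (distFun Ω) γ (I ∩ Ici t)) ≤
    ENNReal.ofReal (A * bdryDistWrt (distFun Ω) (γ t))

def NearLongGeodesics (X : Type*) [MetricSpace X] (C : ℝ) : Prop :=
  ∀ (x : X) (r : ℝ), 0 ≤ r → ∃ (a b : X) (g : ℝ → X), IsGeodesicSegWrt (distFun X) g a b ∧
    (∃ p ∈ segImageWrt (distFun X) g a b, dist x p ≤ C) ∧ r ≤ dist x a ∧ r ≤ dist x b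

section Geodesics

variable [MetricSpace X] {g : ℝ → X} {a b : X}

@[simp] theorem distFun_apply (p q : X) : distFun X p q = dist p q := rfl

theorem infDistWrt_eq_infDist (x : X) (s : Set X) : infDistWrt (distFun X) x s = infDist x s := by
  rw [infDistWrt, sInf_image', infDist_eq_iInf]; rfl

theorem IsGeodesicSegWrt.dist_apply (hg : IsGeodesicSegWrt (distFun X) g a b) {s t : ℝ}
    (hs : s ∈ Icc 0 (dist a b)) (ht : t ∈ Icc 0 (dist a b)) : dist (g s) (g t) = |s - t| :=
  hg.2.2 s hs t ht

theorem IsGeodesicSegWrt.dist_left (hg : IsGeodesicSegWrt (distFun X) g a b) {s : ℝ}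
    (hs : s ∈ Icc 0 (dist a b)) : dist a (g s) = s := by
  have h := hg.dist_apply ⟨le_rfl, dist_nonneg⟩ hs
  rwa [hg.1, zero_sub, abs_neg, abs_of_nonneg hs.1] at h

theorem IsGeodesicSegWrt.dist_right (hg : IsGeodesicSegWrt (distFun X) g a b) {s : ℝ}
    (hs : s ∈ Icc 0 (dist a b)) : dist (g s) b = dist a b - s := by
  have h := hg.dist_apply hs ⟨dist_nonneg, le_rfl⟩
  have hb : g (dist a b) = b := hg.2.1
  rwa [hb, abs_of_nonpos (by linarith [hs.2]), neg_sub] at h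

theorem mem_segImageWrt {s : ℝ} (hs : s ∈ Icc 0 (dist a b)) :
    g s ∈ segImageWrt (distFun X) g a b :=
  ⟨s, hs, rfl⟩

theorem IsGeodesicSegWrt.left_mem_segImageWrt (hg : IsGeodesicSegWrt (distFun X) g a b) :
    a ∈ segImageWrt (distFun X) g a b :=
  ⟨0, ⟨le_rfl, dist_nonneg⟩, hg.1⟩

theorem IsGeodesicSegWrt.dist_add_dist_of_mem (hg : IsGeodesicSegWrt (distFun X) g a b) {p : X}
    (hp : p ∈ segImageWrt (distFun X) g a b) : dist a p + dist p b = dist a b := by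
  obtain ⟨s, hs, rfl⟩ := hp
  rw [hg.dist_left hs, hg.dist_right hs]
  ring

theorem IsGeodesicSegWrt.symm (hg : IsGeodesicSegWrt (distFun X) g a b) :
    IsGeodesicSegWrt (distFun X) (fun s => g (dist a b - s)) b a := by
  refine ⟨by simpa using hg.2.1, by simpa [dist_comm b a] using hg.1, fun s hs t ht => ?_⟩
  simp only [distFun_apply, dist_comm b a, mem_Icc] at hs ht ⊢
  rw [hg.dist_apply ⟨by linarith, by linarith⟩ ⟨by linarith, by linarith⟩, abs_sub_comm]
  ring_nf

theorem segImageWrt_symm :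
    segImageWrt (distFun X) (fun s => g (dist a b - s)) b a = segImageWrt (distFun X) g a b := by
  ext p
  simp only [segImageWrt, mem_image, mem_Icc, distFun_apply, dist_comm b a]
  constructor
  · rintro ⟨s, hs, rfl⟩
    exact ⟨dist a b - s, ⟨by linarith, by linarith⟩, rfl⟩
  · rintro ⟨s, hs, rfl⟩
    exact ⟨dist a b - s, ⟨by linarith, by linarith⟩, by rw [sub_sub_cancel]⟩

variable {γ : ℝ → X}

theorem IsGeodesicRayWrt.dist_eq (hγ : IsGeodesicRayWrt (distFun X) γ) {s t : ℝ} (hs : 0 ≤ s)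
    (ht : 0 ≤ t) : dist (γ s) (γ t) = |s - t| :=
  hγ s hs t ht

theorem IsGeodesicRayWrt.dist_zero_left (hγ : IsGeodesicRayWrt (distFun X) γ) {t : ℝ}
    (ht : 0 ≤ t) : dist (γ 0) (γ t) = t := by
  rw [hγ.dist_eq le_rfl ht, zero_sub, abs_neg, abs_of_nonneg ht]

theorem IsGeodesicRayWrt.isGeodesicSegWrt (hγ : IsGeodesicRayWrt (distFun X) γ) {m : ℝ}
    (hm : 0 ≤ m) : IsGeodesicSegWrt (distFun X) γ (γ 0) (γ m) := by
  refine ⟨rfl, by rw [distFun_apply, hγ.dist_zero_left hm], fun s hs t ht => hγ s hs.1 t ht.1⟩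

theorem IsGeodesicLineWrt.isGeodesicSegWrt (hγ : IsGeodesicLineWrt (distFun X) γ) {s t : ℝ}
    (hst : s ≤ t) : IsGeodesicSegWrt (distFun X) (fun r => γ (s + r)) (γ s) (γ t) := by
  have hd : dist (γ s) (γ t) = t - s := by
    rw [show dist (γ s) (γ t) = |s - t| from hγ s t, abs_of_nonpos (by linarith), neg_sub]
  refine ⟨by simp, by simp [hd], fun r _ r' _ => ?_⟩
  rw [show distFun X (γ (s + r)) (γ (s + r')) = |s + r - (s + r')| from hγ _ _]
  ring_nf

end Geodesics

section Hyperbolic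

variable [MetricSpace X] {δ : ℝ}

theorem gromovProdWrt_le_dist (z a b : X) : gromovProdWrt (distFun X) z a b ≤ dist z a := by
  simp only [gromovProdWrt, distFun_apply]
  linarith [dist_triangle b a z, dist_comm a z, dist_comm a b]

theorem gromovProdWrt_nonneg (z a b : X) : 0 ≤ gromovProdWrt (distFun X) z a b := by
  simp only [gromovProdWrt, distFun_apply]
  linarith [dist_triangle a z b, dist_comm b z]

theorem gromovProdWrt_le_add_dist (z w a b : X) :
    gromovProdWrt (distFun X) z a b ≤ gromovProdWrt (distFun X) w a b + dist z w := by
  simp only [gromovProdWrt, distFun_apply]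
  linarith [dist_triangle a w z, dist_triangle b w z, dist_comm w z]

/-- Up to `δ`, the Gromov product `(a|b)_z` is the distance from `z` at which the side `[z,a]`
stops following `[z,b]` and starts following `[a,b]`. -/
theorem DeltaHyperbolicWrt.exists_near_side (hhyp : DeltaHyperbolicWrt (distFun X) δ)
    {z a b : X} {g₁ g₂ g₃ : ℝ → X} (h₁ : IsGeodesicSegWrt (distFun X) g₁ z a)
    (h₂ : IsGeodesicSegWrt (distFun X) g₂ a b) (h₃ : IsGeodesicSegWrt (distFun X) g₃ b z) {y : X}
    (hy : y ∈ segImageWrt (distFun X) g₁ z a) :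
    (∃ q ∈ segImageWrt (distFun X) g₂ a b,
        dist y q ≤ δ ∧ gromovProdWrt (distFun X) z a b ≤ dist z y + δ) ∨
      ∃ q ∈ segImageWrt (distFun X) g₃ b z,
        dist y q ≤ δ ∧ dist z y ≤ gromovProdWrt (distFun X) z a b + δ := by
  obtain ⟨q, hq, hyq⟩ := (hhyp z a b g₁ g₂ g₃ h₁ h₂ h₃).1 y hy
  replace hyq : dist y q ≤ δ := hyq
  have hzya := h₁.dist_add_dist_of_mem hy
  simp only [gromovProdWrt, distFun_apply]
  rcases hq with hq | hq
  · have haqb := h₂.dist_add_dist_of_mem hq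
    refine Or.inl ⟨q, hq, hyq, ?_⟩
    linarith [dist_triangle4 a q y z, dist_triangle4 b q y z, dist_comm q y, dist_comm y z,
      dist_comm b q]
  · have hbqz := h₃.dist_add_dist_of_mem hq
    refine Or.inr ⟨q, hq, hyq, ?_⟩
    linarith [dist_triangle4 a y q b, dist_triangle z q y, dist_comm a y, dist_comm q y,
      dist_comm q b, dist_comm a z, dist_comm z q]

theorem DeltaHyperbolicWrt.exists_near_gromovProdWrt (hgeo : GeodesicSpaceWrt (distFun X))
    (hhyp : DeltaHyperbolicWrt (distFun X) δ) (hδ : 0 ≤ δ) (z : X) {g : ℝ → X} {a b : X}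
    (hg : IsGeodesicSegWrt (distFun X) g a b) :
    ∃ p ∈ segImageWrt (distFun X) g a b,
      dist z p ≤ gromovProdWrt (distFun X) z a b + 2 * δ + 1 := by
  obtain ⟨g₁, hg₁⟩ := hgeo z a
  obtain ⟨g₃, hg₃⟩ := hgeo b z
  have hprod := gromovProdWrt_nonneg z a b
  -- a point of `[z,a]` just past the branch point, unless `[z,a]` ends before
  set s := min (dist z a) (gromovProdWrt (distFun X) z a b + δ + 1)
  have hs : s ∈ Icc 0 (dist z a) := ⟨le_min dist_nonneg (by linarith), min_le_left _ _⟩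
  have hzy : dist z (g₁ s) = s := hg₁.dist_left hs
  have hs_le : s ≤ gromovProdWrt (distFun X) z a b + δ + 1 := min_le_right _ _
  rcases hhyp.exists_near_side hg₁ hg hg₃ (mem_segImageWrt hs) with
    ⟨q, hq, hyq, -⟩ | ⟨-, -, -, hle⟩
  · exact ⟨q, hq, by linarith [dist_triangle z (g₁ s) q]⟩
  · have hsa : s = dist z a :=
      (min_choice _ _).resolve_right fun h => by linarith
    exact ⟨a, hg.left_mem_segImageWrt, by linarith⟩

/-- The point `y` is `δ`-close to `[a,b]`, or else `δ`-close to a point `q` of `[z,b]` before the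
branch point of the triangle `z a b`; then `q` is `δ`-close to `[b,c]`, or else close to `z`,
which is close to `[b,c]` by `exists_near_gromovProdWrt`. -/
theorem DeltaHyperbolicWrt.exists_near_seg_ab_or_seg_bc (hgeo : GeodesicSpaceWrt (distFun X))
    (hhyp : DeltaHyperbolicWrt (distFun X) δ) (hδ : 0 ≤ δ) {z a : X} (b c : X) {g : ℝ → X}
    (hg : IsGeodesicSegWrt (distFun X) g z a) {y : X} (hy : y ∈ segImageWrt (distFun X) g z a) :
    (∃ k : ℝ → X, IsGeodesicSegWrt (distFun X) k a b ∧ ∃ p ∈ segImageWrt (distFun X) k a b,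
        dist y p ≤ 2 * gromovProdWrt (distFun X) z b c + 4 * δ + 1) ∨
      ∃ k : ℝ → X, IsGeodesicSegWrt (distFun X) k b c ∧ ∃ p ∈ segImageWrt (distFun X) k b c,
        dist y p ≤ 2 * gromovProdWrt (distFun X) z b c + 4 * δ + 1 := by
  have hprod := gromovProdWrt_nonneg z b c
  obtain ⟨gab, hgab⟩ := hgeo a b
  obtain ⟨gbz, hgbz⟩ := hgeo b z
  rcases hhyp.exists_near_side hg hgab hgbz hy with ⟨q, hq, hyq, -⟩ | ⟨q, hq, hyq, -⟩
  · exact Or.inl ⟨gab, hgab, q, hq, by linarith⟩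
  obtain ⟨gbc, hgbc⟩ := hgeo b c
  obtain ⟨gcz, hgcz⟩ := hgeo c z
  refine Or.inr ⟨gbc, hgbc, ?_⟩
  rcases hhyp.exists_near_side hgbz.symm hgbc hgcz (by rwa [segImageWrt_symm]) with
    ⟨q', hq', hqq', -⟩ | ⟨-, -, -, hzq⟩
  · exact ⟨q', hq', by linarith [dist_triangle y q q']⟩
  obtain ⟨p, hp, hzp⟩ := hhyp.exists_near_gromovProdWrt hgeo hδ z hgbc
  exact ⟨p, hp, by linarith [dist_triangle4 y q z p, dist_comm q z]⟩

theorem DeltaHyperbolicWrt.gromovProdWrt_rays_le (hgeo : GeodesicSpaceWrt (distFun X))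
    (hhyp : DeltaHyperbolicWrt (distFun X) δ) (hδ : 0 ≤ δ) {ρ₁ ρ₂ : ℝ → X}
    (h₁ : IsGeodesicRayWrt (distFun X) ρ₁) (h₂ : IsGeodesicRayWrt (distFun X) ρ₂) {t₀ : ℝ}
    (ht₀ : 0 ≤ t₀) (hfar : 3 * dist (ρ₁ 0) (ρ₂ 0) + 4 * δ < dist (ρ₁ t₀) (ρ₂ t₀)) {m : ℝ}
    (hm : 0 ≤ m) : gromovProdWrt (distFun X) (ρ₁ 0) (ρ₁ m) (ρ₂ m) ≤ t₀ + δ := by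
  rcases le_or_gt m (t₀ + δ) with hmt | htm
  · linarith [gromovProdWrt_le_dist (ρ₁ 0) (ρ₁ m) (ρ₂ m), h₁.dist_zero_left hm]
  obtain ⟨g₂, hg₂⟩ := hgeo (ρ₁ m) (ρ₂ m)
  obtain ⟨g₃, hg₃⟩ := hgeo (ρ₂ m) (ρ₁ 0)
  have hy : ρ₁ t₀ ∈ segImageWrt (distFun X) ρ₁ (ρ₁ 0) (ρ₁ m) :=
    mem_segImageWrt (by rw [h₁.dist_zero_left hm]; exact ⟨ht₀, by linarith⟩)
  rcases hhyp.exists_near_side (h₁.isGeodesicSegWrt hm) hg₂ hg₃ hy with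
    ⟨-, -, -, hle⟩ | ⟨q, hq, hyq, -⟩
  · rwa [h₁.dist_zero_left ht₀] at hle
  exfalso
  -- the point `q ∈ [ρ₂ m, ρ₁ 0]` near `ρ₁ t₀` is near `[ρ₁ 0, ρ₂ 0]` or `ρ₂`: both put `ρ₁ t₀`
  -- too close to `ρ₂ t₀`
  obtain ⟨g₄, hg₄⟩ := hgeo (ρ₁ 0) (ρ₂ 0)
  obtain ⟨q', hq', hqq'⟩ := (hhyp _ _ _ g₃ g₄ ρ₂ hg₃ hg₄ (h₂.isGeodesicSegWrt hm)).1 q hq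
  replace hqq' : dist q q' ≤ δ := hqq'
  have hρ₁t₀ := h₁.dist_zero_left ht₀
  rcases hq' with hq' | ⟨s, hs, rfl⟩
  · have := hg₄.dist_add_dist_of_mem hq'
    linarith [dist_triangle4 (ρ₁ 0) q' q (ρ₁ t₀), dist_triangle4 (ρ₁ t₀) (ρ₁ 0) (ρ₂ 0) (ρ₂ t₀),
      h₂.dist_zero_left ht₀, dist_comm q (ρ₁ t₀), dist_comm q' q, dist_comm (ρ₁ t₀) (ρ₁ 0),
      dist_nonneg (x := q') (y := ρ₂ 0)]
  · have hs0 : 0 ≤ s := hs.1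
    have hρ₂s := h₂.dist_zero_left hs0
    have hst : |s - t₀| ≤ dist (ρ₁ 0) (ρ₂ 0) + 2 * δ := abs_le.2
      ⟨by linarith [dist_triangle4 (ρ₁ 0) (ρ₂ 0) (ρ₂ s) (ρ₁ t₀), dist_triangle (ρ₂ s) q (ρ₁ t₀),
          dist_comm q (ρ₁ t₀), dist_comm (ρ₂ s) q],
        by linarith [dist_triangle4 (ρ₂ 0) (ρ₁ 0) (ρ₁ t₀) (ρ₂ s), dist_triangle (ρ₁ t₀) q (ρ₂ s),
          dist_comm (ρ₂ 0) (ρ₁ 0)]⟩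
    linarith [dist_triangle4 (ρ₁ t₀) q (ρ₂ s) (ρ₂ t₀), h₂.dist_eq hs0 ht₀,
      dist_nonneg (x := ρ₁ 0) (y := ρ₂ 0)]

theorem DeltaHyperbolicWrt.exists_gromovProdWrt_rays_le (hgeo : GeodesicSpaceWrt (distFun X))
    (hhyp : DeltaHyperbolicWrt (distFun X) δ) (hδ : 0 ≤ δ) {ρ₁ ρ₂ : ℝ → X}
    (h₁ : IsGeodesicRayWrt (distFun X) ρ₁) (h₂ : IsGeodesicRayWrt (distFun X) ρ₂)
    (hne : ¬ RayEquivWrt (distFun X) ρ₁ ρ₂) :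
    ∃ P, 0 ≤ P ∧ ∀ (z : X) (m : ℝ), 0 ≤ m →
      gromovProdWrt (distFun X) z (ρ₁ m) (ρ₂ m) ≤ P + dist z (ρ₁ 0) := by
  simp only [RayEquivWrt, not_exists, not_forall, not_le] at hne
  obtain ⟨t₀, ht₀, hfar⟩ := hne (3 * dist (ρ₁ 0) (ρ₂ 0) + 4 * δ)
  refine ⟨t₀ + δ, by linarith [show (0 : ℝ) ≤ t₀ from ht₀], fun z m hm => ?_⟩
  linarith [gromovProdWrt_le_add_dist z (ρ₁ 0) (ρ₁ m) (ρ₂ m),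
    hhyp.gromovProdWrt_rays_le hgeo hδ h₁ h₂ ht₀ hfar hm]

end Hyperbolic

section NearLongGeodesics

variable [MetricSpace X] {δ K C : ℝ}

theorem nearLongGeodesics_of_roughStarlikeFromRayWrt {ρ : ℝ → X}
    (hρ : RoughStarlikeFromRayWrt (distFun X) K ρ) : NearLongGeodesics X (K + 1) := by
  intro x r hr
  obtain ⟨γ, hγ, -, hx⟩ := hρ x
  rw [infDistWrt_eq_infDist] at hx
  obtain ⟨-, ⟨t₀, rfl⟩, hxt₀⟩ :=
    (infDist_lt_iff (range_nonempty γ)).1 (hx.trans_lt (lt_add_one K))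
  have hK : 0 ≤ K + 1 := by linarith [dist_nonneg (x := x) (y := γ t₀)]
  set n := r + K + 1
  have hdist : ∀ s, dist (γ t₀) (γ s) = |t₀ - s| := hγ t₀
  have hseg := hγ.isGeodesicSegWrt (show t₀ - n ≤ t₀ + n by linarith)
  have hlen : dist (γ (t₀ - n)) (γ (t₀ + n)) = 2 * n := by
    rw [show dist (γ (t₀ - n)) (γ (t₀ + n)) = |t₀ - n - (t₀ + n)| from hγ _ _,
      abs_of_nonpos (by linarith)]
    ring
  have hmid : γ t₀ ∈ segImageWrt (distFun X) (fun s => γ (t₀ - n + s)) (γ (t₀ - n)) (γ (t₀ + n)) :=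
    ⟨n, by rw [distFun_apply, hlen]; constructor <;> linarith, by simp⟩
  refine ⟨_, _, _, hseg, ⟨γ t₀, hmid, hxt₀.le⟩, ?_, ?_⟩
  · have := hdist (t₀ - n)
    rw [abs_of_nonneg (by linarith)] at this
    linarith [dist_triangle (γ t₀) x (γ (t₀ - n)), dist_comm x (γ t₀)]
  · have := hdist (t₀ + n)
    rw [abs_of_nonpos (by linarith)] at this
    linarith [dist_triangle (γ t₀) x (γ (t₀ + n)), dist_comm x (γ t₀)]

theorem nearLongGeodesics_of_roughStarlikeFromPointWrt (hgeo : GeodesicSpaceWrt (distFun X))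
    (hhyp : DeltaHyperbolicWrt (distFun X) δ) (hδ : 0 ≤ δ) (hK : 0 ≤ K) {ρ₁ ρ₂ : ℝ → X}
    (h₁ : IsGeodesicRayWrt (distFun X) ρ₁) (h₂ : IsGeodesicRayWrt (distFun X) ρ₂)
    (hne : ¬ RayEquivWrt (distFun X) ρ₁ ρ₂) {z : X}
    (hz : RoughStarlikeFromPointWrt (distFun X) K z) :
    ∃ C, 0 ≤ C ∧ NearLongGeodesics X C := by
  obtain ⟨P, hP, hPρ⟩ := hhyp.exists_gromovProdWrt_rays_le hgeo hδ h₁ h₂ hne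
  set Pz := P + dist z (ρ₁ 0)
  have hPz : 0 ≤ Pz := by positivity
  refine ⟨K + 1 + 2 * Pz + 4 * δ + 1, by positivity, fun x r hr => ?_⟩
  obtain ⟨γ, hγ, rfl, hx⟩ := hz x
  rw [infDistWrt_eq_infDist] at hx
  obtain ⟨-, ⟨s₀, hs₀, rfl⟩, hxs₀⟩ :=
    (infDist_lt_iff (nonempty_Ici.image γ)).1 (hx.trans_lt (lt_add_one K))
  replace hs₀ : 0 ≤ s₀ := hs₀
  set n := s₀ + r + K + 1
  set m := r + dist (γ 0) x + dist (γ 0) (ρ₁ 0) + dist (γ 0) (ρ₂ 0)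
  have hm : 0 ≤ m := by positivity
  have hfar₀ : r ≤ dist x (γ n) := by
    linarith [hγ.dist_eq hs₀ (show 0 ≤ n by positivity),
      abs_of_nonpos (show s₀ - n ≤ 0 by linarith), dist_triangle (γ s₀) x (γ n),
      dist_comm x (γ s₀)]
  have hfar₁ : r ≤ dist x (ρ₁ m) := by
    linarith [h₁.dist_zero_left hm, dist_triangle4 (ρ₁ 0) (γ 0) x (ρ₁ m), dist_comm (ρ₁ 0) (γ 0),
      dist_comm x (γ 0), dist_nonneg (x := γ 0) (y := ρ₂ 0)]
  have hfar₂ : r ≤ dist x (ρ₂ m) := by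
    linarith [h₂.dist_zero_left hm, dist_triangle4 (ρ₂ 0) (γ 0) x (ρ₂ m), dist_comm (ρ₂ 0) (γ 0),
      dist_comm x (γ 0), dist_nonneg (x := γ 0) (y := ρ₁ 0)]
  have hy : γ s₀ ∈ segImageWrt (distFun X) γ (γ 0) (γ n) :=
    mem_segImageWrt (by rw [hγ.dist_zero_left (by positivity)]; exact ⟨hs₀, by linarith⟩)
  have hPm := hPρ (γ 0) m hm
  rcases hhyp.exists_near_seg_ab_or_seg_bc hgeo hδ (ρ₁ m) (ρ₂ m)
      (hγ.isGeodesicSegWrt (by positivity)) hy with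
    ⟨g, hg, p, hp, hyp⟩ | ⟨g, hg, p, hp, hyp⟩
  · exact ⟨_, _, g, hg, ⟨p, hp, by linarith [dist_triangle x (γ s₀) p]⟩, hfar₀, hfar₁⟩
  · exact ⟨_, _, g, hg, ⟨p, hp, by linarith [dist_triangle x (γ s₀) p]⟩, hfar₁, hfar₂⟩

end NearLongGeodesics

/-- By thinness of the triangle `w a b`, where `[a,b]` is given by `hC`, one of the sides from `w`
also passes near `x`. -/
theorem NearLongGeodesics.exists_seg_from [MetricSpace X] {δ C : ℝ}
    (hC : NearLongGeodesics X C) (hgeo : GeodesicSpaceWrt (distFun X))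
    (hhyp : DeltaHyperbolicWrt (distFun X) δ) (w x : X) {r : ℝ} (hr : 0 ≤ r) :
    ∃ (c : X) (g : ℝ → X) (t : ℝ), IsGeodesicSegWrt (distFun X) g w c ∧
      t ∈ Icc 0 (dist w c) ∧ dist x (g t) ≤ C + δ ∧ r ≤ dist x c := by
  obtain ⟨a, b, g, hg, ⟨p, hp, hxp⟩, ha, hb⟩ := hC x r hr
  obtain ⟨ga, hga⟩ := hgeo w a
  obtain ⟨gb, hgb⟩ := hgeo w b
  obtain ⟨q, hq, hpq⟩ := (hhyp w a b ga g _ hga hg hgb.symm).2.1 p hp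
  replace hpq : dist p q ≤ δ := hpq
  rw [segImageWrt_symm] at hq
  rcases hq with ⟨t, ht, rfl⟩ | ⟨t, ht, rfl⟩
  · exact ⟨a, ga, t, hga, ht, by linarith [dist_triangle x p (ga t)], ha⟩
  · exact ⟨b, gb, t, hgb, ht, by linarith [dist_triangle x p (gb t)], hb⟩

section Limits

variable [MetricSpace X] [ProperSpace X] {ι : Type*} (U : Ultrafilter ι)

theorem exists_tendsto_of_eventually_dist_le {f : ι → X} {c : X} {R : ℝ}
    (h : ∀ᶠ i in U, dist c (f i) ≤ R) : ∃ y, Tendsto f U (𝓝 y) := by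
  obtain ⟨y, -, hy⟩ := (isCompact_closedBall c R).ultrafilter_le_nhds (U.map f)
    (le_principal_iff.2 (h.mono fun i hi => by rwa [mem_closedBall, dist_comm]))
  exact ⟨y, hy⟩

theorem exists_limit_of_segments {p q : ι → X} {g : ι → ℝ → X}
    (hg : ∀ i, IsGeodesicSegWrt (distFun X) (g i) (p i) (q i)) {u : ι → ℝ}
    (hu : ∀ i, u i ∈ Icc 0 (dist (p i) (q i))) {x : X} {C : ℝ}
    (hx : ∀ i, dist x (g i (u i)) ≤ C) :
    ∃ γ : ℝ → X,
      (∀ s, (∀ᶠ i in U, u i + s ∈ Icc 0 (dist (p i) (q i))) →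
        Tendsto (fun i => g i (u i + s)) U (𝓝 (γ s))) ∧
      ∀ s t, (∀ᶠ i in U, u i + s ∈ Icc 0 (dist (p i) (q i))) →
        (∀ᶠ i in U, u i + t ∈ Icc 0 (dist (p i) (q i))) → dist (γ s) (γ t) = |s - t| := by
  have hlim : ∀ s, ∃ y, (∀ᶠ i in U, u i + s ∈ Icc 0 (dist (p i) (q i))) →
      Tendsto (fun i => g i (u i + s)) U (𝓝 y) := by
    intro s
    by_cases hs : ∀ᶠ i in U, u i + s ∈ Icc 0 (dist (p i) (q i))
    · obtain ⟨y, hy⟩ := exists_tendsto_of_eventually_dist_le U (c := x) (R := C + |s|)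
        (hs.mono fun i hi => by
          have := (hg i).dist_apply (hu i) hi
          rw [sub_add_cancel_left, abs_neg] at this
          linarith [dist_triangle x (g i (u i)) (g i (u i + s)), hx i])
      exact ⟨y, fun _ => hy⟩
    · exact ⟨x, fun h => absurd h hs⟩
  choose γ hγ using hlim
  refine ⟨γ, hγ, fun s t hs ht => tendsto_nhds_unique ((hγ s hs).dist (hγ t ht))
    (tendsto_const_nhds.congr' ((hs.and ht).mono fun i hi => ?_))⟩
  simp only [(hg i).dist_apply hi.1 hi.2, add_sub_add_left_eq_sub]

theorem exists_ray_of_segments {w : X} {c : ι → X} {g : ι → ℝ → X}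
    (hg : ∀ i, IsGeodesicSegWrt (distFun X) (g i) w (c i))
    (hlen : Tendsto (fun i => dist w (c i)) U atTop) {t : ι → ℝ}
    (ht : ∀ i, t i ∈ Icc 0 (dist w (c i))) {x : X} {C : ℝ} (hx : ∀ i, dist x (g i (t i)) ≤ C) :
    ∃ γ : ℝ → X, IsGeodesicRayWrt (distFun X) γ ∧ γ 0 = w ∧ ∃ s ∈ Ici 0, dist x (γ s) ≤ C := by
  obtain ⟨γ, hlim, hiso⟩ := exists_limit_of_segments U hg (u := fun _ => 0)
    (fun i => ⟨le_rfl, dist_nonneg⟩) (x := w) (C := 0) (fun i => by simp [(hg i).1])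
  have hin : ∀ s, 0 ≤ s → ∀ᶠ i in U, 0 + s ∈ Icc 0 (dist w (c i)) := fun s hs =>
    (hlen.eventually_ge_atTop s).mono fun i hi => ⟨by linarith, by linarith⟩
  have hγ0 : γ 0 = w :=
    tendsto_nhds_unique (hlim 0 (hin 0 le_rfl))
      (by simp only [add_zero, (hg _).1]; exact tendsto_const_nhds)
  -- the marked parameters are bounded, hence converge along `U`
  obtain ⟨s₀, hs₀⟩ := exists_tendsto_of_eventually_dist_le U (c := (0 : ℝ)) (R := dist w x + C)
    (Eventually.of_forall fun i => by
      rw [Real.dist_eq, zero_sub, abs_neg, abs_of_nonneg (ht i).1, ← (hg i).dist_left (ht i)]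
      linarith [dist_triangle w x (g i (t i)), hx i])
  have hs₀0 : 0 ≤ s₀ := ge_of_tendsto hs₀ (Eventually.of_forall fun i => (ht i).1)
  refine ⟨γ, fun s hs s' hs' => hiso s s' (hin s hs) (hin s' hs'), hγ0, s₀, hs₀0, ?_⟩
  refine le_of_tendsto_of_tendsto (tendsto_const_nhds.dist (hlim s₀ (hin s₀ hs₀0)))
    (by simpa using tendsto_const_nhds.add (hs₀.dist (tendsto_const_nhds (x := s₀))) : Tendsto
      (fun i => C + dist (t i) s₀) U (𝓝 C)) ((hin s₀ hs₀0).mono fun i hi => ?_)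
  have := (hg i).dist_apply (ht i) hi
  rw [zero_add] at this ⊢
  linarith [dist_triangle x (g i (t i)) (g i s₀), hx i, Real.dist_eq (t i) s₀]

theorem exists_line_of_segments {p q : ι → X} {g : ι → ℝ → X}
    (hg : ∀ i, IsGeodesicSegWrt (distFun X) (g i) (p i) (q i)) {u : ι → ℝ}
    (hu : ∀ i, u i ∈ Icc 0 (dist (p i) (q i))) {x : X} {C : ℝ} (hx : ∀ i, dist x (g i (u i)) ≤ C)
    (hleft : Tendsto u U atTop) (hright : Tendsto (fun i => dist (p i) (q i) - u i) U atTop) :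
    ∃ γ : ℝ → X, IsGeodesicLineWrt (distFun X) γ ∧ dist x (γ 0) ≤ C ∧
      ∀ s, Tendsto (fun i => g i (u i + s)) U (𝓝 (γ s)) := by
  obtain ⟨γ, hlim, hiso⟩ := exists_limit_of_segments U hg hu hx
  have hin : ∀ s, ∀ᶠ i in U, u i + s ∈ Icc 0 (dist (p i) (q i)) := fun s =>
    ((hleft.eventually_ge_atTop (-s)).and (hright.eventually_ge_atTop s)).mono fun i hi =>
      ⟨by linarith [hi.1], by linarith [hi.2]⟩
  refine ⟨γ, fun s t => hiso s t (hin s) (hin t), ?_, fun s => hlim s (hin s)⟩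
  exact le_of_tendsto (tendsto_const_nhds.dist (hlim 0 (hin 0)))
    (Eventually.of_forall fun i => by simpa using hx i)

end Limits

section Starlike

variable [MetricSpace X] {δ C : ℝ}

/-- The bound on `t` forces `u - t + δ < (c|ρ 0)_{ρ m}`, so `h (u - t)` lies before the branch
point of the triangle `(ρ m) c (ρ 0)` and is `δ`-close to `ρ`. -/
theorem DeltaHyperbolicWrt.dist_seg_ray_le (hgeo : GeodesicSpaceWrt (distFun X))
    (hhyp : DeltaHyperbolicWrt (distFun X) δ) (hδ : 0 ≤ δ) {ρ : ℝ → X}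
    (hρ : IsGeodesicRayWrt (distFun X) ρ) {m : ℝ} (hm : 0 ≤ m) {c : X} {h : ℝ → X}
    (hh : IsGeodesicSegWrt (distFun X) h (ρ m) c) {u : ℝ} (hu : u ∈ Icc 0 (dist (ρ m) c))
    {x : X} (hx : dist x (h u) ≤ C) {t : ℝ} (ht : dist (ρ 0) x + C + δ < t) (htu : t ≤ u) :
    dist (h (u - t)) (ρ t) ≤ 2 * δ + |m - u| := by
  have ht₀ : 0 ≤ t := by linarith [dist_nonneg (x := ρ 0) (y := x), dist_nonneg (x := x) (y := h u)]
  have hv : u - t ∈ Icc 0 (dist (ρ m) c) := ⟨by linarith, by linarith [hu.2]⟩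
  obtain ⟨g₂, hg₂⟩ := hgeo c (ρ 0)
  rcases hhyp.exists_near_side hh hg₂ (hρ.isGeodesicSegWrt hm) (mem_segImageWrt hv) with
    ⟨-, -, -, hle⟩ | ⟨-, ⟨s, hs, rfl⟩, hys, -⟩
  · exfalso
    simp only [gromovProdWrt, distFun_apply] at hle
    linarith [hh.dist_left hu, hh.dist_left hv, hh.dist_right hu, hρ.dist_zero_left hm,
      dist_triangle4 (ρ m) (ρ 0) x (h u), dist_triangle x (h u) c, dist_triangle c x (ρ 0),
      dist_comm (ρ m) (ρ 0), dist_comm c (ρ m), dist_comm c x, dist_comm x (ρ 0)]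
  · replace hs : s ∈ Icc 0 m := by simpa [hρ.dist_zero_left hm] using hs
    have hsm : |s - t - (m - u)| ≤ δ := by
      have := hρ.dist_eq hs.1 hm
      rw [abs_of_nonpos (by linarith [hs.2])] at this
      refine abs_le.2 ⟨?_, ?_⟩ <;>
        linarith [hh.dist_left hv, dist_triangle (ρ m) (h (u - t)) (ρ s),
          dist_triangle (ρ m) (ρ s) (h (u - t)), dist_comm (ρ m) (ρ s), dist_comm (h (u - t)) (ρ s)]
    calc dist (h (u - t)) (ρ t) ≤ dist (h (u - t)) (ρ s) + |s - t| := by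
          rw [← hρ.dist_eq hs.1 ht₀]; exact dist_triangle _ _ _
      _ ≤ δ + (|s - t - (m - u)| + |m - u|) :=
          add_le_add hys (by simpa using abs_add_le (s - t - (m - u)) (m - u))
      _ ≤ 2 * δ + |m - u| := by linarith

theorem NearLongGeodesics.roughStarlikeFromPointWrt [ProperSpace X] (hC : NearLongGeodesics X C)
    (hgeo : GeodesicSpaceWrt (distFun X)) (hhyp : DeltaHyperbolicWrt (distFun X) δ) (w : X) :
    RoughStarlikeFromPointWrt (distFun X) (C + δ) w := by
  intro x
  choose c g t hg ht hx hfar using fun n : ℕ => hC.exists_seg_from hgeo hhyp w x n.cast_nonneg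
  set U := Ultrafilter.of (atTop : Filter ℕ)
  have hlen : Tendsto (fun n => dist w (c n)) U atTop :=
    (tendsto_atTop_mono (fun n => by linarith [hfar n, dist_triangle x w (c n)])
      (tendsto_atTop_add_const_right _ (-dist x w) tendsto_natCast_atTop_atTop)).mono_left
      (Ultrafilter.of_le (atTop : Filter ℕ))
  obtain ⟨γ, hγ, hγ0, s, hs, hxs⟩ := exists_ray_of_segments U hg hlen ht hx
  refine ⟨γ, hγ, hγ0, ?_⟩
  rw [infDistWrt_eq_infDist]
  exact (infDist_le_dist_of_mem (mem_image_of_mem γ hs)).trans hxs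

theorem NearLongGeodesics.roughStarlikeFromRayWrt [ProperSpace X] (hC : NearLongGeodesics X C)
    (hgeo : GeodesicSpaceWrt (distFun X)) (hhyp : DeltaHyperbolicWrt (distFun X) δ) (hδ : 0 ≤ δ)
    {ρ : ℝ → X} (hρ : IsGeodesicRayWrt (distFun X) ρ) :
    RoughStarlikeFromRayWrt (distFun X) (C + δ) ρ := by
  intro x
  choose c h u hh hu hx hfar using fun n : ℕ => hC.exists_seg_from hgeo hhyp (ρ n) x n.cast_nonneg
  set dx := dist (ρ 0) x
  have hun : ∀ n : ℕ, |(n : ℝ) - u n| ≤ dx + (C + δ) := fun n => abs_le.2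
    ⟨by linarith [(hh n).dist_left (hu n), hρ.dist_zero_left n.cast_nonneg, hx n,
        dist_triangle4 (ρ n) (ρ 0) x (h n (u n)), dist_comm (ρ n) (ρ 0)],
      by linarith [(hh n).dist_left (hu n), hρ.dist_zero_left n.cast_nonneg, hx n,
        dist_triangle4 (ρ 0) x (h n (u n)) (ρ n), dist_comm (h n (u n)) (ρ n)]⟩
  set U := Ultrafilter.of (atTop : Filter ℕ)
  have hleft : Tendsto u U atTop :=
    (tendsto_atTop_mono (fun n => by linarith [(abs_le.1 (hun n)).2])
      (tendsto_atTop_add_const_right _ (-(dx + (C + δ))) tendsto_natCast_atTop_atTop)).mono_left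
      (Ultrafilter.of_le (atTop : Filter ℕ))
  have hright : Tendsto (fun n : ℕ => dist (ρ n) (c n) - u n) U atTop :=
    (tendsto_atTop_mono (fun n => by
        linarith [(hh n).dist_right (hu n), hfar n, hx n, dist_triangle x (h n (u n)) (c n)])
      (tendsto_atTop_add_const_right _ (-(C + δ)) tendsto_natCast_atTop_atTop)).mono_left
      (Ultrafilter.of_le (atTop : Filter ℕ))
  obtain ⟨γ, hγ, hγ0, hlim⟩ := exists_line_of_segments U hh hu hx hleft hright
  refine ⟨γ, hγ, ⟨3 * (dx + (C + δ)) + 2 * δ, fun t ht => ?_⟩, ?_⟩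
  · replace ht : 0 ≤ t := ht
    show dist (γ (-t)) (ρ t) ≤ _
    rcases le_or_gt t (dx + (C + δ) + δ) with hsmall | hlarge
    · have hγt : dist (γ (-t)) (γ 0) = t := by
        rw [show dist (γ (-t)) (γ 0) = |-t - 0| from hγ _ _, sub_zero, abs_neg, abs_of_nonneg ht]
      linarith [dist_triangle4 (γ (-t)) (γ 0) x (ρ t), dist_triangle x (ρ 0) (ρ t),
        hρ.dist_zero_left ht, dist_comm x (ρ 0), dist_comm (γ 0) x]
    · refine le_of_tendsto ((hlim (-t)).dist tendsto_const_nhds) ?_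
      filter_upwards [hleft.eventually_ge_atTop t] with n hn
      rw [← sub_eq_add_neg]
      linarith [hhyp.dist_seg_ray_le hgeo hδ hρ n.cast_nonneg (hh n) (hu n) (hx n) hlarge hn,
        hun n, abs_nonneg ((n : ℝ) - u n)]
  · rw [infDistWrt_eq_infDist]
    exact (infDist_le_dist_of_mem (mem_range_self 0)).trans hγ0

end Starlike

/-- If a proper geodesic `δ`-hyperbolic space `X` whose Gromov boundary
contains at least two points is `K`-roughly starlike from some point of `X ∪ ∂X`, then
there is `K' ≥ 0` such that `X` is `K'`-roughly starlike from all points of `X ∪ ∂X`. -/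
theorem statement5 {X : Type*} [MetricSpace X] [ProperSpace X] (δ K : ℝ)
    (hδ : 0 ≤ δ) (hK : 0 ≤ K)
    (hgeo : GeodesicSpaceWrt (distFun X)) (hhyp : DeltaHyperbolicWrt (distFun X) δ)
    (htwo : ∃ ρ₁ ρ₂ : ℝ → X, IsGeodesicRayWrt (distFun X) ρ₁ ∧
      IsGeodesicRayWrt (distFun X) ρ₂ ∧ ¬ RayEquivWrt (distFun X) ρ₁ ρ₂)
    (hstar : (∃ z : X, RoughStarlikeFromPointWrt (distFun X) K z) ∨
      (∃ ρ : ℝ → X, IsGeodesicRayWrt (distFun X) ρ ∧ RoughStarlikeFromRayWrt (distFun X) K ρ)) :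
    ∃ K' : ℝ, 0 ≤ K' ∧
      (∀ z : X, RoughStarlikeFromPointWrt (distFun X) K' z) ∧
      ∀ ρ : ℝ → X, IsGeodesicRayWrt (distFun X) ρ → RoughStarlikeFromRayWrt (distFun X) K' ρ := by
  obtain ⟨C, hC0, hC⟩ : ∃ C, 0 ≤ C ∧ NearLongGeodesics X C := by
    rcases hstar with ⟨z, hz⟩ | ⟨ρ, -, hρ⟩
    · obtain ⟨ρ₁, ρ₂, h₁, h₂, hne⟩ := htwo
      exact nearLongGeodesics_of_roughStarlikeFromPointWrt hgeo hhyp hδ hK h₁ h₂ hne hz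
    · exact ⟨K + 1, by linarith, nearLongGeodesics_of_roughStarlikeFromRayWrt hρ⟩
  exact ⟨C + δ, by linarith, fun z => hC.roughStarlikeFromPointWrt hgeo hhyp z,
    fun ρ hρ => hC.roughStarlikeFromRayWrt hgeo hhyp hδ hρ⟩

end Paper

end
end

section
/- Let (Ω,d) be an incomplete metric space, let A ≥ 1, and let γ: I → Ω be a curve such that for every compact subinterval J ⊂ I the restriction γ|_J is an A-uniform curve. Then γ is an A-uniform curve. -/
open Metric Set Filter Topology
open scoped ENNReal Classical

noncomputable section

namespace Paper

variable {X Y : Type*}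

/-!
Uniformity on a compact subinterval `[s, t] ⊆ I` gives `ℓ(γ|[s,t]) ≤ A d(γ s, γ t)`, and the
length of `γ` on `I` is the supremum of the lengths of its compact pieces. If it is infinite, a
piece `[a, b]` of large length forces `d(γ s, γ t) ≥ ℓ(γ|[a,b]) / A` for all `s ≤ a ≤ b ≤ t`. If it
is finite, `γ` has limits `γ₋, γ₊` at the ends of `I` in the completion, and letting `s, t` tend
to the ends gives `ℓ(γ) ≤ A d(γ₋, γ₊)`. The condition at a time `t` only involves pieces `[a, t]`
and `[t, b]`, which lie in the compact interval `[a, b]`.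
-/

lemma varOn_distFun {Ω : Type*} [MetricSpace Ω] (γ : ℝ → Ω) (I : Set ℝ) :
    varOn (distFun Ω) γ I = eVariationOn γ I := by
  simp only [varOn, distFun, eVariationOn, edist_dist]

lemma _root_.Isometry.eVariationOn_comp {α E F : Type*} [LinearOrder α] [PseudoEMetricSpace E]
    [PseudoEMetricSpace F] {f : E → F} (hf : Isometry f) (g : α → E) (s : Set α) :
    eVariationOn (f ∘ g) s = eVariationOn g s := by
  simp only [eVariationOn, Function.comp_apply, hf.edist_eq]

section EndFilters

variable {I : Set ℝ}

lemma self_mem_leftEndFilter : I ∈ leftEndFilter I := by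
  unfold leftEndFilter
  split_ifs
  exacts [self_mem_nhdsWithin, mem_inf_of_right (mem_principal_self I)]

lemma self_mem_rightEndFilter : I ∈ rightEndFilter I := by
  unfold rightEndFilter
  split_ifs
  exacts [self_mem_nhdsWithin, mem_inf_of_right (mem_principal_self I)]

lemma leftEndFilter_neBot (hI : I.Nonempty) : (leftEndFilter I).NeBot := by
  unfold leftEndFilter
  split_ifs with hb
  · exact mem_closure_iff_nhdsWithin_neBot.mp (csInf_mem_closure hI hb)
  · refine inf_principal_neBot_iff.mpr fun U hU => ?_
    obtain ⟨c, hc⟩ := mem_atBot_sets.mp hU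
    obtain ⟨x, hxI, hxc⟩ := not_bddBelow_iff.mp hb c
    exact ⟨x, hc x hxc.le, hxI⟩

lemma rightEndFilter_neBot (hI : I.Nonempty) : (rightEndFilter I).NeBot := by
  unfold rightEndFilter
  split_ifs with hb
  · exact mem_closure_iff_nhdsWithin_neBot.mp (csSup_mem_closure hI hb)
  · refine inf_principal_neBot_iff.mpr fun U hU => ?_
    obtain ⟨c, hc⟩ := mem_atTop_sets.mp hU
    obtain ⟨x, hxI, hxc⟩ := not_bddAbove_iff.mp hb c
    exact ⟨x, hc x hxc.le, hxI⟩

lemma leftEndFilter_Icc {a b : ℝ} (hab : a ≤ b) :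
    leftEndFilter (Icc a b) = 𝓝[Icc a b] a := by
  rw [leftEndFilter, if_pos bddBelow_Icc, csInf_Icc hab]

lemma rightEndFilter_Icc {a b : ℝ} (hab : a ≤ b) :
    rightEndFilter (Icc a b) = 𝓝[Icc a b] b := by
  rw [rightEndFilter, if_pos bddAbove_Icc, csSup_Icc hab]

lemma leftEndFilter_eq_or_forall_Iic_mem :
    (∃ m, IsLeast I m ∧ leftEndFilter I = 𝓝[I] m) ∨
      ∀ a ∈ I, I ∩ Iic a ∈ leftEndFilter I := by
  unfold leftEndFilter
  by_cases hb : BddBelow I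
  · rw [if_pos hb]
    by_cases hm : sInf I ∈ I
    · exact Or.inl ⟨sInf I, ⟨hm, fun x hx => csInf_le hb hx⟩, rfl⟩
    · refine Or.inr fun a ha => inter_mem self_mem_nhdsWithin (mem_nhdsWithin_of_mem_nhds ?_)
      exact Iic_mem_nhds ((csInf_le hb ha).lt_of_ne fun h => hm (h ▸ ha))
  · rw [if_neg hb]
    exact Or.inr fun a _ =>
      inter_comm I _ ▸ inter_mem_inf (Iic_mem_atBot a) (mem_principal_self I)

lemma rightEndFilter_eq_or_forall_Ici_mem :
    (∃ m, IsGreatest I m ∧ rightEndFilter I = 𝓝[I] m) ∨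
      ∀ b ∈ I, I ∩ Ici b ∈ rightEndFilter I := by
  unfold rightEndFilter
  by_cases hb : BddAbove I
  · rw [if_pos hb]
    by_cases hm : sSup I ∈ I
    · exact Or.inl ⟨sSup I, ⟨hm, fun x hx => le_csSup hb hx⟩, rfl⟩
    · refine Or.inr fun b hb' => inter_mem self_mem_nhdsWithin (mem_nhdsWithin_of_mem_nhds ?_)
      exact Ici_mem_nhds ((le_csSup hb hb').lt_of_ne fun h => hm (h ▸ hb'))
  · rw [if_neg hb]
    exact Or.inr fun b _ =>
      inter_comm I _ ▸ inter_mem_inf (Ici_mem_atTop b) (mem_principal_self I)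

-- If `I` contains its left end `m`, the end filter is `𝓝[I] m`, which need not see only points
-- `≤ a`; clamping to `min s a` produces such points in every case.
lemma tendsto_min_leftEndFilter {a : ℝ} (ha : a ∈ I) :
    Tendsto (fun s => min s a) (leftEndFilter I) (leftEndFilter I) := by
  rcases leftEndFilter_eq_or_forall_Iic_mem with ⟨m, hm, hL⟩ | hL
  · rw [hL, tendsto_nhdsWithin_iff]
    refine ⟨?_, eventually_mem_nhdsWithin.mono fun s hs => ?_⟩
    · exact ((continuous_id.min continuous_const).tendsto' m m
        (min_eq_left (hm.2 ha))).mono_left nhdsWithin_le_nhds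
    · rcases min_choice s a with h | h <;> rw [h] <;> assumption
  · refine tendsto_id.congr' ?_
    filter_upwards [hL a ha] with s hs using (min_eq_left hs.2).symm

lemma tendsto_max_rightEndFilter {b : ℝ} (hb : b ∈ I) :
    Tendsto (fun t => max t b) (rightEndFilter I) (rightEndFilter I) := by
  rcases rightEndFilter_eq_or_forall_Ici_mem with ⟨m, hm, hR⟩ | hR
  · rw [hR, tendsto_nhdsWithin_iff]
    refine ⟨?_, eventually_mem_nhdsWithin.mono fun t ht => ?_⟩
    · exact ((continuous_id.max continuous_const).tendsto' m m
        (max_eq_left (hm.2 hb))).mono_left nhdsWithin_le_nhds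
    · rcases max_choice t b with h | h <;> rw [h] <;> assumption
  · refine tendsto_id.congr' ?_
    filter_upwards [hR b hb] with t ht using (max_eq_left ht.2).symm

end EndFilters

lemma _root_.Set.OrdConnected.exists_Icc_subset_mem_nhdsWithin {I : Set ℝ} (hI : I.OrdConnected)
    {t : ℝ} (ht : t ∈ I) : ∃ a b, Icc a b ⊆ I ∧ Icc a b ∈ 𝓝[I] t := by
  obtain ⟨a, haI, ha⟩ : ∃ a ∈ I, Ici a ∈ 𝓝[I] t := by
    by_cases h : ∃ a ∈ I, a < t
    · obtain ⟨a, haI, hat⟩ := h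
      exact ⟨a, haI, mem_nhdsWithin_of_mem_nhds (Ici_mem_nhds hat)⟩
    · simp only [not_exists, not_and, not_lt] at h
      exact ⟨t, ht, mem_of_superset self_mem_nhdsWithin h⟩
  obtain ⟨b, hbI, hb⟩ : ∃ b ∈ I, Iic b ∈ 𝓝[I] t := by
    by_cases h : ∃ b ∈ I, t < b
    · obtain ⟨b, hbI, htb⟩ := h
      exact ⟨b, hbI, mem_nhdsWithin_of_mem_nhds (Iic_mem_nhds htb)⟩
    · simp only [not_exists, not_and, not_lt] at h
      exact ⟨t, ht, mem_of_superset self_mem_nhdsWithin h⟩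
  exact ⟨a, b, hI.out haI hbI, inter_mem ha hb⟩

lemma continuousOn_of_forall_Icc {Y : Type*} [TopologicalSpace Y] {γ : ℝ → Y} {I : Set ℝ}
    (hI : I.OrdConnected) (h : ∀ a b, a ≤ b → Icc a b ⊆ I → ContinuousOn γ (Icc a b)) :
    ContinuousOn γ I := fun t ht => by
  obtain ⟨a, b, hsub, hmem⟩ := hI.exists_Icc_subset_mem_nhdsWithin ht
  have hat : t ∈ Icc a b := mem_of_mem_nhdsWithin ht hmem
  exact (h a b (hat.1.trans hat.2) hsub t hat).mono_of_mem_nhdsWithin hmem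

section Variation

variable {E : Type*} {I : Set ℝ}

lemma exists_tendsto_leftEndFilter [PseudoEMetricSpace E] [CompleteSpace E] {f : ℝ → E}
    (hf : ContinuousOn f I) (hbv : BoundedVariationOn f I) (hI : I.Nonempty) :
    ∃ l, Tendsto f (leftEndFilter I) (𝓝 l) := by
  rcases leftEndFilter_eq_or_forall_Iic_mem with ⟨m, hm, hL⟩ | hL
  · exact ⟨f m, hL ▸ hf m hm.1⟩
  · obtain ⟨l, hl⟩ := hbv.ofDual.exists_tendsto_left_of_filter
      (map OrderDual.toDual (leftEndFilter I)) (fun a ha => hL _ ha) hI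
    exact ⟨l, tendsto_map'_iff.mp hl⟩

lemma exists_tendsto_rightEndFilter [PseudoEMetricSpace E] [CompleteSpace E] {f : ℝ → E}
    (hf : ContinuousOn f I) (hbv : BoundedVariationOn f I) (hI : I.Nonempty) :
    ∃ l, Tendsto f (rightEndFilter I) (𝓝 l) := by
  rcases rightEndFilter_eq_or_forall_Ici_mem with ⟨m, hm, hR⟩ | hR
  · exact ⟨f m, hR ▸ hf m hm.1⟩
  · exact hbv.exists_tendsto_left_of_filter _ hR hI

lemma min_eVariationOn_inter_Iic_Ici_le [PseudoEMetricSpace E] {γ : ℝ → E} {t : ℝ}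
    {C : ℝ≥0∞} (h : ∀ a ∈ I, ∀ b ∈ I, a ≤ t → t ≤ b →
      min (eVariationOn γ (Icc a b ∩ Iic t)) (eVariationOn γ (Icc a b ∩ Ici t)) ≤ C) :
    min (eVariationOn γ (I ∩ Iic t)) (eVariationOn γ (I ∩ Ici t)) ≤ C := by
  by_contra! hC
  rw [lt_min_iff] at hC
  obtain ⟨a, ⟨ha, hat⟩, _, -, -, hCa⟩ := eVariationOn.exists_lt_eVariationOn_inter_Icc hC.1
  obtain ⟨_, -, b, ⟨hb, htb⟩, -, hCb⟩ := eVariationOn.exists_lt_eVariationOn_inter_Icc hC.2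
  refine (h a ha b hb hat htb).not_gt (lt_min ?_ ?_)
  · exact hCa.trans_le <|
      eVariationOn.mono γ fun x hx => ⟨⟨hx.2.1, hx.1.2.trans htb⟩, hx.1.2⟩
  · exact hCb.trans_le <|
      eVariationOn.mono γ fun x hx => ⟨⟨hat.trans hx.1.2, hx.2.2⟩, hx.1.2⟩

variable [PseudoMetricSpace E] {A : ℝ} {γ : ℝ → E}

lemma _root_.ContinuousOn.tendsto_dist_min_leftEndFilter (hγ : ContinuousOn γ I) {a : ℝ}
    (ha : a ∈ I) :
    Tendsto (fun s => dist (γ (min s a)) (γ s)) (leftEndFilter I) (𝓝 0) := by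
  rcases leftEndFilter_eq_or_forall_Iic_mem with ⟨m, hm, hL⟩ | hL
  · have hγm : Tendsto γ (leftEndFilter I) (𝓝 (γ m)) := hL ▸ hγ m hm.1
    simpa using (hγm.comp (tendsto_min_leftEndFilter ha)).dist hγm
  · refine tendsto_const_nhds.congr' ?_
    filter_upwards [hL a ha] with s hs
    rw [min_eq_left hs.2, dist_self]

lemma _root_.ContinuousOn.tendsto_dist_max_rightEndFilter (hγ : ContinuousOn γ I) {b : ℝ}
    (hb : b ∈ I) :
    Tendsto (fun t => dist (γ (max t b)) (γ t)) (rightEndFilter I) (𝓝 0) := by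
  rcases rightEndFilter_eq_or_forall_Ici_mem with ⟨m, hm, hR⟩ | hR
  · have hγm : Tendsto γ (rightEndFilter I) (𝓝 (γ m)) := hR ▸ hγ m hm.1
    simpa using (hγm.comp (tendsto_max_rightEndFilter hb)).dist hγm
  · refine tendsto_const_nhds.congr' ?_
    filter_upwards [hR b hb] with t ht
    rw [max_eq_left ht.2, dist_self]

lemma eVariationOn_inter_Icc_le_of_le_dist
    (hvar : ∀ s ∈ I, ∀ t ∈ I, s ≤ t →
      eVariationOn γ (Icc s t) ≤ ENNReal.ofReal (A * dist (γ s) (γ t)))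
    {a b s t : ℝ} (hab : a ≤ b) (hs : s ∈ I) (ht : t ∈ I) (hsa : s ≤ a) (hbt : b ≤ t) :
    eVariationOn γ (I ∩ Icc a b) ≤ ENNReal.ofReal (A * dist (γ s) (γ t)) :=
  (eVariationOn.mono γ (inter_subset_right.trans (Icc_subset_Icc hsa hbt))).trans
    (hvar s hs t ht (hsa.trans (hab.trans hbt)))

lemma tendsto_dist_atTop_of_eVariationOn_eq_top (hA : 0 < A) (hγ : ContinuousOn γ I)
    (hvar : ∀ s ∈ I, ∀ t ∈ I, s ≤ t →
      eVariationOn γ (Icc s t) ≤ ENNReal.ofReal (A * dist (γ s) (γ t)))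
    (hV : eVariationOn γ I = ⊤) :
    Tendsto (fun p : ℝ × ℝ => dist (γ p.1) (γ p.2)) (leftEndFilter I ×ˢ rightEndFilter I)
      atTop := by
  refine tendsto_atTop.2 fun M => ?_
  obtain ⟨a, ha, b, hb, hab, hlt⟩ := eVariationOn.exists_lt_eVariationOn_inter_Icc
    (hV ▸ ENNReal.ofReal_lt_top : ENNReal.ofReal (A * (M + 2)) < eVariationOn γ I)
  filter_upwards [prod_mem_prod
    (inter_mem self_mem_leftEndFilter
      ((hγ.tendsto_dist_min_leftEndFilter ha).eventually (gt_mem_nhds one_pos)))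
    (inter_mem self_mem_rightEndFilter
      ((hγ.tendsto_dist_max_rightEndFilter hb).eventually (gt_mem_nhds one_pos)))]
    with ⟨s, t⟩ ⟨⟨hs, hsa⟩, ⟨ht, htb⟩⟩
  change dist (γ (min s a)) (γ s) < 1 at hsa
  change dist (γ (max t b)) (γ t) < 1 at htb
  have hfar : A * (M + 2) < A * dist (γ (min s a)) (γ (max t b)) :=
    (ENNReal.ofReal_lt_ofReal_iff'.mp (hlt.trans_le (eVariationOn_inter_Icc_le_of_le_dist hvar
      hab.le (min_rec' (· ∈ I) hs ha) (max_rec' (· ∈ I) ht hb) (min_le_right s a)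
      (le_max_right t b)))).1
  have := dist_triangle4 (γ (min s a)) (γ s) (γ t) (γ (max t b))
  rw [dist_comm (γ t)] at this
  change M ≤ dist (γ s) (γ t)
  linarith [(mul_lt_mul_iff_right₀ hA).mp hfar]

lemma eVariationOn_le_dist_of_tendsto [(leftEndFilter I).NeBot] [(rightEndFilter I).NeBot]
    (hvar : ∀ s ∈ I, ∀ t ∈ I, s ≤ t →
      eVariationOn γ (Icc s t) ≤ ENNReal.ofReal (A * dist (γ s) (γ t)))
    {gm gp : UniformSpace.Completion E}
    (hgm : Tendsto (fun s => (γ s : UniformSpace.Completion E)) (leftEndFilter I) (𝓝 gm))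
    (hgp : Tendsto (fun t => (γ t : UniformSpace.Completion E)) (rightEndFilter I) (𝓝 gp)) :
    eVariationOn γ I ≤ ENNReal.ofReal (A * dist gm gp) := by
  rw [eVariationOn.eq_biSup_inter_Icc]
  refine iSup₂_le fun ⟨a, b⟩ ⟨ha, hb, hab⟩ => ?_
  have hlim : Tendsto (fun p : ℝ × ℝ => ENNReal.ofReal (A *
      dist (γ (min p.1 a) : UniformSpace.Completion E) (γ (max p.2 b))))
      (leftEndFilter I ×ˢ rightEndFilter I) (𝓝 (ENNReal.ofReal (A * dist gm gp))) :=
    ENNReal.tendsto_ofReal ((((hgm.comp (tendsto_min_leftEndFilter ha)).comp tendsto_fst).dist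
      ((hgp.comp (tendsto_max_rightEndFilter hb)).comp tendsto_snd)).const_mul A)
  refine ge_of_tendsto hlim ?_
  filter_upwards [prod_mem_prod self_mem_leftEndFilter self_mem_rightEndFilter]
    with ⟨s, t⟩ ⟨hs, ht⟩
  rw [UniformSpace.Completion.dist_eq]
  exact eVariationOn_inter_Icc_le_of_le_dist hvar hab (min_rec' (· ∈ I) hs ha)
    (max_rec' (· ∈ I) ht hb) (min_le_right s a) (le_max_right t b)

end Variation

lemma IsUniformCurve.eVariationOn_Icc_le {Ω : Type*} [MetricSpace Ω] {A : ℝ} {γ : ℝ → Ω}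
    {a b : ℝ} (hab : a ≤ b) (hγ : IsUniformCurve A γ (Icc a b)) :
    eVariationOn γ (Icc a b) ≤ ENNReal.ofReal (A * dist (γ a) (γ b)) := by
  obtain ⟨hne, -, hcont, hlen, -⟩ := hγ
  have ha : a ∈ Icc a b := left_mem_Icc.2 hab
  have hb : b ∈ Icc a b := right_mem_Icc.2 hab
  have := leftEndFilter_Icc hab ▸ leftEndFilter_neBot hne
  have := rightEndFilter_Icc hab ▸ rightEndFilter_neBot hne
  rw [varOn_distFun, leftEndFilter_Icc hab, rightEndFilter_Icc hab] at hlen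
  rcases hlen with ⟨-, gm, gp, hgm, hgp, hle⟩ | ⟨-, htop⟩
  · have hcoe := (UniformSpace.Completion.continuous_coe Ω).tendsto
    rwa [tendsto_nhds_unique hgm ((hcoe _).comp (hcont a ha)),
      tendsto_nhds_unique hgp ((hcoe _).comp (hcont b hb)),
      UniformSpace.Completion.dist_eq] at hle
  · exact (not_tendsto_nhds_of_tendsto_atTop htop _
      (((hcont a ha).tendsto.comp tendsto_fst).dist ((hcont b hb).tendsto.comp tendsto_snd))).elim

theorem statement10_general {Ω : Type*} [MetricSpace Ω]
    (A : ℝ) (hA : 1 ≤ A) (γ : ℝ → Ω) (I : Set ℝ)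
    (hne : I.Nonempty) (hconn : I.OrdConnected)
    (h : ∀ a b : ℝ, a ≤ b → Icc a b ⊆ I → IsUniformCurve A γ (Icc a b)) :
    IsUniformCurve A γ I := by
  have hγ : ContinuousOn γ I :=
    continuousOn_of_forall_Icc hconn fun a b hab hsub => (h a b hab hsub).2.2.1
  have hvar : ∀ s ∈ I, ∀ t ∈ I, s ≤ t →
      eVariationOn γ (Icc s t) ≤ ENNReal.ofReal (A * dist (γ s) (γ t)) :=
    fun s hs t ht hst => (h s t hst (hconn.out hs ht)).eVariationOn_Icc_le hst
  have := leftEndFilter_neBot hne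
  have := rightEndFilter_neBot hne
  simp only [IsUniformCurve, varOn_distFun]
  refine ⟨hne, hconn, hγ, ?_, fun t ht => min_eVariationOn_inter_Iic_Ici_le ?_⟩
  · by_cases hV : eVariationOn γ I = ⊤
    · exact Or.inr ⟨hV, tendsto_dist_atTop_of_eVariationOn_eq_top (one_pos.trans_le hA) hγ
        hvar hV⟩
    have hγ' := (UniformSpace.Completion.continuous_coe Ω).comp_continuousOn hγ
    have hbv : BoundedVariationOn ((↑) ∘ γ : ℝ → UniformSpace.Completion Ω) I := by
      rwa [BoundedVariationOn, UniformSpace.Completion.coe_isometry.eVariationOn_comp]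
    obtain ⟨gm, hgm⟩ := exists_tendsto_leftEndFilter hγ' hbv hne
    obtain ⟨gp, hgp⟩ := exists_tendsto_rightEndFilter hγ' hbv hne
    exact Or.inl ⟨hV, gm, gp, hgm, hgp, eVariationOn_le_dist_of_tendsto hvar hgm hgp⟩
  · intro a ha b hb hat htb
    simpa only [varOn_distFun] using
      (h a b (hat.trans htb) (hconn.out ha hb)).2.2.2.2 t ⟨hat, htb⟩

/-- If `γ : I → Ω` is a curve in an incomplete metric space whose
restriction to every compact subinterval of `I` is an `A`-uniform curve, then `γ` itself
is an `A`-uniform curve. -/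
theorem statement10 {Ω : Type*} [MetricSpace Ω] (hinc : ¬ CompleteSpace Ω)
    (A : ℝ) (hA : 1 ≤ A) (γ : ℝ → Ω) (I : Set ℝ)
    (hne : I.Nonempty) (hconn : I.OrdConnected)
    (h : ∀ a b : ℝ, a ≤ b → Icc a b ⊆ I → IsUniformCurve A γ (Icc a b)) :
    IsUniformCurve A γ I :=
  statement10_general A hA γ I hne hconn h

end Paper

end
end
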